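/- For h ∈ ℝ and z ∈ ℂ∖ℝ: ((z−w)/(2π²))·∫₀^∞ r²/((−h²+r²+w)(−h²+r²+z)) dr = (1/(4π))·(√(−h²+z) − √(−h²+w)), where the square roots have positive real part. -/

import Mathlib

/-!
With `σ_z² = -h² + z` and `σ_w² = -h² + w`, the integrand is `r² / ((r² + σ_w²)(r² + σ_z²))`.
Partial fractions reduce it to `∫₀^∞ dr / (r² + s²) = π / (2 s)` for `0 < re s`, so the
integral equals `π / (2 (σ_w + σ_z))`, and the prefactor `z - w = σ_z² - σ_w²` cancels `σ_w + σ_z`.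
-/

open MeasureTheory Real Set Filter Topology Asymptotics Complex

lemma tendsto_log_ofReal_add_sub_log_atTop (c : ℂ) :
    Tendsto (fun r : ℝ => Complex.log (r + c) - Complex.log r) atTop (𝓝 0) := by
  have hlim : Tendsto (fun r : ℝ => 1 + c * ((r⁻¹ : ℝ) : ℂ)) atTop (𝓝 1) := by
    simpa using (tendsto_inv_atTop_zero.ofReal.const_mul c).const_add 1
  have hlog := (continuousAt_clog one_mem_slitPlane).tendsto.comp hlim
  rw [Complex.log_one] at hlog
  refine hlog.congr' ?_
  filter_upwards [eventually_gt_atTop 0, hlim.eventually_ne one_ne_zero] with r hr hne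
  have hr' : (r : ℂ) ≠ 0 := ofReal_ne_zero.mpr hr.ne'
  rw [show (r : ℂ) + c = r * (1 + c * ((r⁻¹ : ℝ) : ℂ)) by push_cast; field_simp,
    Complex.log_ofReal_mul hr hne, ofReal_log hr.le]
  simp

section InvSqAddSq

variable {s : ℂ}

lemma ofReal_sq_add_sq_eq_mul (s : ℂ) (r : ℝ) :
    (r : ℂ) ^ 2 + s ^ 2 = (r - I * s) * (r + I * s) := by
  linear_combination s ^ 2 * I_sq

lemma ofReal_sub_I_mul_mem_slitPlane (hs : 0 < s.re) (r : ℝ) : (r : ℂ) - I * s ∈ slitPlane :=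
  mem_slitPlane_iff.2 (Or.inr (by simpa using hs.ne'))

lemma ofReal_add_I_mul_mem_slitPlane (hs : 0 < s.re) (r : ℝ) : (r : ℂ) + I * s ∈ slitPlane :=
  mem_slitPlane_iff.2 (Or.inr (by simpa using hs.ne'))

lemma ofReal_sq_add_sq_ne_zero (hs : 0 < s.re) (r : ℝ) : (r : ℂ) ^ 2 + s ^ 2 ≠ 0 := by
  rw [ofReal_sq_add_sq_eq_mul]
  exact mul_ne_zero (slitPlane_ne_zero (ofReal_sub_I_mul_mem_slitPlane hs r))
    (slitPlane_ne_zero (ofReal_add_I_mul_mem_slitPlane hs r))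

/-- `s⁻¹ arctan (r / s)`, written through the logarithms of the two linear factors `r ∓ I s` of
`r² + s²`; for `0 < re s` these stay off the branch cut of `log`. -/
noncomputable def invSqAddSqPrimitive (s : ℂ) (r : ℝ) : ℂ :=
  (2 * I * s)⁻¹ * (log (r - I * s) - log (r + I * s))

lemma hasDerivAt_invSqAddSqPrimitive (hs : 0 < s.re) (r : ℝ) :
    HasDerivAt (invSqAddSqPrimitive s) ((r : ℂ) ^ 2 + s ^ 2)⁻¹ r := by
  have hsub := ofReal_sub_I_mul_mem_slitPlane hs r
  have hadd := ofReal_add_I_mul_mem_slitPlane hs r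
  have hs0 := ne_zero_of_re_pos hs
  have h := ((((hasDerivAt_id r).ofReal_comp.sub_const (I * s)).clog_real hsub).sub
    (((hasDerivAt_id r).ofReal_comp.add_const (I * s)).clog_real hadd)).const_mul (2 * I * s)⁻¹
  refine h.congr_deriv ?_
  simp only [id, ofReal_one, one_div]
  rw [inv_sub_inv (slitPlane_ne_zero hsub) (slitPlane_ne_zero hadd), ofReal_sq_add_sq_eq_mul]
  field_simp
  ring

lemma invSqAddSqPrimitive_zero (hs : 0 < s.re) : invSqAddSqPrimitive s 0 = -(π / (2 * s)) := by
  have hIs : 0 < (I * s).im := by simpa using hs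
  have hs0 := ne_zero_of_re_pos hs
  have hlog : Complex.log (-(I * s)) - Complex.log (I * s) = -π * I := by
    rw [Complex.log, Complex.log, norm_neg, arg_neg_eq_arg_sub_pi_of_im_pos hIs]
    push_cast
    ring
  rw [invSqAddSqPrimitive, ofReal_zero, zero_sub, zero_add, hlog]
  field_simp

lemma isBigO_inv_sq_add_sq_atTop (s : ℂ) :
    (fun r : ℝ => ((r : ℂ) ^ 2 + s ^ 2)⁻¹) =O[atTop] fun r : ℝ => r ^ (-2 : ℝ) := by
  refine IsBigO.of_bound 2 ?_
  filter_upwards [eventually_ge_atTop (2 * ‖s‖ + 1)] with r hr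
  have hr0 : 0 < r := by linarith [norm_nonneg s]
  have hlow : r ^ 2 / 2 ≤ ‖(r : ℂ) ^ 2 + s ^ 2‖ := by
    have := norm_sub_le_norm_add ((r : ℂ) ^ 2) (s ^ 2)
    rw [norm_pow, norm_pow, norm_real, Real.norm_of_nonneg hr0.le] at this
    nlinarith [norm_nonneg s]
  rw [norm_inv, Real.norm_of_nonneg (by positivity), Real.rpow_neg hr0.le, Real.rpow_two]
  calc ‖(r : ℂ) ^ 2 + s ^ 2‖⁻¹ ≤ (r ^ 2 / 2)⁻¹ := inv_anti₀ (by positivity) hlow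
    _ = 2 * (r ^ 2)⁻¹ := by ring

lemma tendsto_invSqAddSqPrimitive_atTop (s : ℂ) :
    Tendsto (invSqAddSqPrimitive s) atTop (𝓝 0) := by
  have h := ((tendsto_log_ofReal_add_sub_log_atTop (-(I * s))).sub
    (tendsto_log_ofReal_add_sub_log_atTop (I * s))).const_mul (2 * I * s)⁻¹
  rw [sub_zero, mul_zero] at h
  refine h.congr fun r => ?_
  rw [invSqAddSqPrimitive, ← sub_eq_add_neg]
  ring

lemma integrableOn_Ioi_inv_sq_add_sq (hs : 0 < s.re) :
    IntegrableOn (fun r : ℝ => ((r : ℂ) ^ 2 + s ^ 2)⁻¹) (Ioi 0) := by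
  have hcont : Continuous fun r : ℝ => ((r : ℂ) ^ 2 + s ^ 2)⁻¹ :=
    (by fun_prop : Continuous fun r : ℝ => (r : ℂ) ^ 2 + s ^ 2).inv₀ (ofReal_sq_add_sq_ne_zero hs)
  exact ((hcont.locallyIntegrable.locallyIntegrableOn (Ici 0)).integrableOn_of_isBigO_atTop
    (isBigO_inv_sq_add_sq_atTop s) (integrableAtFilter_rpow_atTop_iff.2 (by norm_num))).mono_set
    Ioi_subset_Ici_self

lemma integral_Ioi_inv_sq_add_sq (hs : 0 < s.re) :
    ∫ r in Ioi (0 : ℝ), ((r : ℂ) ^ 2 + s ^ 2)⁻¹ = π / (2 * s) := by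
  rw [integral_Ioi_of_hasDerivAt_of_tendsto' (fun r _ => hasDerivAt_invSqAddSqPrimitive hs r)
    (integrableOn_Ioi_inv_sq_add_sq hs) (tendsto_invSqAddSqPrimitive_atTop s),
    invSqAddSqPrimitive_zero hs, zero_sub, neg_neg]

lemma integral_Ioi_sq_div_sq_add_sq_mul_sq_add_sq {a b : ℂ} (ha : 0 < a.re) (hb : 0 < b.re)
    (hab : a ≠ b) :
    ∫ r in Ioi (0 : ℝ), (r : ℂ) ^ 2 / (((r : ℂ) ^ 2 + a ^ 2) * ((r : ℂ) ^ 2 + b ^ 2)) =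
      π / (2 * (a + b)) := by
  have hab' : a + b ≠ 0 := ne_zero_of_re_pos (by rw [add_re]; exact add_pos ha hb)
  have hsq : b ^ 2 - a ^ 2 ≠ 0 := by
    rw [sq_sub_sq]
    exact mul_ne_zero (by rwa [add_comm]) (sub_ne_zero.2 hab.symm)
  have hsplit : ∀ r : ℝ, (r : ℂ) ^ 2 / (((r : ℂ) ^ 2 + a ^ 2) * ((r : ℂ) ^ 2 + b ^ 2)) =
      (b ^ 2 - a ^ 2)⁻¹ * (b ^ 2 * ((r : ℂ) ^ 2 + b ^ 2)⁻¹ - a ^ 2 * ((r : ℂ) ^ 2 + a ^ 2)⁻¹) := by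
    intro r
    field_simp [ofReal_sq_add_sq_ne_zero ha r, ofReal_sq_add_sq_ne_zero hb r]
    ring
  simp_rw [hsplit]
  rw [integral_const_mul, integral_sub ((integrableOn_Ioi_inv_sq_add_sq hb).const_mul _)
    ((integrableOn_Ioi_inv_sq_add_sq ha).const_mul _), integral_const_mul, integral_const_mul,
    integral_Ioi_inv_sq_add_sq ha, integral_Ioi_inv_sq_add_sq hb]
  field_simp
  ring

end InvSqAddSq

theorem stmt16_general (h : ℝ) (z w : ℂ)
    (hrez : 0 < ((-(h : ℂ) ^ 2 + z) ^ (1/2 : ℂ)).re)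
    (hrew : 0 < ((-(h : ℂ) ^ 2 + w) ^ (1/2 : ℂ)).re) :
    ((z - w) / (2 * (π : ℂ) ^ 2)) *
        (∫ r in Set.Ioi (0 : ℝ),
          ((r : ℂ) ^ 2) / ((-(h : ℂ) ^ 2 + (r : ℂ) ^ 2 + w) * (-(h : ℂ) ^ 2 + (r : ℂ) ^ 2 + z)))
      = (1 / (4 * (π : ℂ))) *
          ((-(h : ℂ) ^ 2 + z) ^ (1/2 : ℂ) - (-(h : ℂ) ^ 2 + w) ^ (1/2 : ℂ)) := by
  by_cases hzw : z = w
  · simp [hzw]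
  set σz := (-(h : ℂ) ^ 2 + z) ^ (1/2 : ℂ)
  set σw := (-(h : ℂ) ^ 2 + w) ^ (1/2 : ℂ)
  have hσz : σz ^ 2 = -(h : ℂ) ^ 2 + z := by simp [σz]
  have hσw : σw ^ 2 = -(h : ℂ) ^ 2 + w := by simp [σw]
  have hne : σw ≠ σz := fun heq => hzw (by linear_combination -hσz + hσw - (σz + σw) * heq)
  have hdenom_z : ∀ r : ℝ, -(h : ℂ) ^ 2 + (r : ℂ) ^ 2 + z = (r : ℂ) ^ 2 + σz ^ 2 := by
    intro r; rw [hσz]; ring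
  have hdenom_w : ∀ r : ℝ, -(h : ℂ) ^ 2 + (r : ℂ) ^ 2 + w = (r : ℂ) ^ 2 + σw ^ 2 := by
    intro r; rw [hσw]; ring
  simp_rw [hdenom_z, hdenom_w]
  rw [integral_Ioi_sq_div_sq_add_sq_mul_sq_add_sq hrew hrez hne,
    show z - w = σz ^ 2 - σw ^ 2 by rw [hσz, hσw]; ring]
  have hsum : σw + σz ≠ 0 := ne_zero_of_re_pos (by rw [add_re]; exact add_pos hrew hrez)
  have hπ : (π : ℂ) ≠ 0 := ofReal_ne_zero.2 pi_ne_zero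
  field_simp
  ring

/-- For `h ∈ ℝ` and non-real `z, w ∈ ℂ`, with the square roots
taken with positive real part:
`((z−w)/(2π²)) ∫₀^∞ r²/((−h²+r²+w)(−h²+r²+z)) dr = (√(−h²+z) − √(−h²+w))/(4π)`. -/
theorem stmt16 (h : ℝ) (z w : ℂ) (hz : z.im ≠ 0) (hw : w.im ≠ 0)
    (hrez : 0 < ((-(h : ℂ) ^ 2 + z) ^ (1/2 : ℂ)).re)
    (hrew : 0 < ((-(h : ℂ) ^ 2 + w) ^ (1/2 : ℂ)).re) :
    ((z - w) / (2 * (π : ℂ) ^ 2)) *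
        (∫ r in Set.Ioi (0 : ℝ),
          ((r : ℂ) ^ 2) / ((-(h : ℂ) ^ 2 + (r : ℂ) ^ 2 + w) * (-(h : ℂ) ^ 2 + (r : ℂ) ^ 2 + z)))
      = (1 / (4 * (π : ℂ))) *
          ((-(h : ℂ) ^ 2 + z) ^ (1/2 : ℂ) - (-(h : ℂ) ^ 2 + w) ^ (1/2 : ℂ)) :=
  stmt16_general h z w hrez hrew
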